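/- arXiv:2212.01833 — 2 statements merged into one kernel-verified Lean document; each statement's English description precedes it below -/
import Mathlib

section
/- (Sine–cosine form of the neuron expansion.) Let n ≥ 1 and let a, ω, φ ∈ ℝ^n and b, x ∈ ℝ. Then sin(∑_{i=1}^n a_i·sin(ω_i x + φ_i) + b) = ∑_{k∈ℤ^n} [A_k·cos((∑_i k_i ω_i)·x) + B_k·sin((∑_i k_i ω_i)·x)], where A_k = α_k(a)·sin(∑_i k_i φ_i + b), B_k = α_k(a)·cos(∑_i k_i φ_i + b), and the family over k ∈ ℤ^n is summable. -/
open Real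

/-- Bessel function of the first kind of integer order `k`:
`J_k(a) = (1/π) ∫_0^π cos(k t − a sin t) dt`. -/
noncomputable def besselJ (k : ℤ) (a : ℝ) : ℝ :=
  (1 / π) * ∫ t in (0:ℝ)..π, Real.cos (k * t - a * Real.sin t)

/-- Amplitude `α_k(a) = ∏_{i=1}^n J_{k_i}(a_i)`. -/
noncomputable def amp {n : ℕ} (a : Fin n → ℝ) (k : Fin n → ℤ) : ℝ :=
  ∏ i, besselJ (k i) (a i)

open Real Complex MeasureTheory intervalIntegral

local instance : Fact (0 < 2 * π) := ⟨by positivity⟩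

/-- The periodic function `θ ↦ exp(i a sin θ)` on the circle. -/
noncomputable def gfun (a : ℝ) : C(AddCircle (2 * π), ℂ) :=
  ⟨fun z => Complex.exp ((a * Real.Angle.sin z : ℝ) * Complex.I),
   by
    apply Complex.continuous_exp.comp
    exact (Complex.continuous_ofReal.comp
      (continuous_const.mul Real.Angle.continuous_sin)).mul continuous_const⟩

lemma gfun_coe (a t : ℝ) : gfun a (t : ℝ) = Complex.exp ((a * Real.sin t : ℝ) * Complex.I) := by
  have h : Real.Angle.sin ((t : ℝ) : AddCircle (2*π)) = Real.sin t := Real.Angle.sin_coe t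
  simp only [gfun, ContinuousMap.coe_mk, h]

lemma even_int (a : ℝ) (k : ℤ) :
    (∫ x in (-π)..π, Real.cos (k * x - a * Real.sin x))
      = 2 * ∫ x in (0:ℝ)..π, Real.cos (k * x - a * Real.sin x) := by
  have hcont : ∀ c d : ℝ, IntervalIntegrable
      (fun x => Real.cos (k * x - a * Real.sin x)) volume c d := fun c d => by
    apply Continuous.intervalIntegrable; fun_prop
  have h1 : (∫ x in (-π)..(0:ℝ), Real.cos (k * x - a * Real.sin x))
      = ∫ x in (0:ℝ)..π, Real.cos (k * x - a * Real.sin x) := by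
    have h2 := intervalIntegral.integral_comp_neg (a := (0:ℝ)) (b := π)
      (fun x => Real.cos (k * x - a * Real.sin x))
    simp only [neg_zero] at h2
    rw [← h2]
    apply intervalIntegral.integral_congr
    intro x _
    simp only [mul_neg, Real.sin_neg]
    rw [show -((k:ℝ) * x) - -(a * Real.sin x) = -((k:ℝ) * x - a * Real.sin x) by ring, Real.cos_neg]
  rw [← intervalIntegral.integral_add_adjacent_intervals (hcont (-π) 0) (hcont 0 π), h1]
  ring

lemma odd_int (a : ℝ) (k : ℤ) :
    (∫ x in (-π)..π, Real.sin (a * Real.sin x - k * x)) = 0 := by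
  have hcont : ∀ c d : ℝ, IntervalIntegrable
      (fun x => Real.sin (a * Real.sin x - k * x)) volume c d := fun c d => by
    apply Continuous.intervalIntegrable; fun_prop
  have h1 : (∫ x in (-π)..(0:ℝ), Real.sin (a * Real.sin x - k * x))
      = -∫ x in (0:ℝ)..π, Real.sin (a * Real.sin x - k * x) := by
    have h2 := intervalIntegral.integral_comp_neg (a := (0:ℝ)) (b := π)
      (fun x => Real.sin (a * Real.sin x - k * x))
    simp only [neg_zero] at h2
    rw [← h2, ← intervalIntegral.integral_neg]
    apply intervalIntegral.integral_congr
    intro x _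
    simp only [Real.sin_neg, mul_neg]
    rw [show -(a * Real.sin x) - -((k:ℝ) * x) = -(a * Real.sin x - (k:ℝ) * x) by ring, Real.sin_neg]
  rw [← intervalIntegral.integral_add_adjacent_intervals (hcont (-π) 0) (hcont 0 π), h1]
  ring

lemma fourierCoeff_gfun (a : ℝ) (k : ℤ) :
    fourierCoeff (⇑(gfun a)) k = ((besselJ k a : ℝ) : ℂ) := by
  rw [fourierCoeff_eq_intervalIntegral _ k (-π)]
  have hint : ∀ x : ℝ, (fourier (-k) (x : AddCircle (2*π))) • gfun a (x : ℝ)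
      = ((Real.cos (k * x - a * Real.sin x) : ℝ) : ℂ)
        + ((Real.sin (a * Real.sin x - k * x) : ℝ) : ℂ) * Complex.I := by
    intro x
    rw [fourier_coe_apply, gfun_coe, smul_eq_mul, ← Complex.exp_add]
    have : 2 * ↑π * Complex.I * ↑(-k) * ↑x / ↑(2 * π) + ↑(a * Real.sin x) * Complex.I
        = ((a * Real.sin x - k * x : ℝ) : ℂ) * Complex.I := by
      push_cast
      have : (π:ℂ) ≠ 0 := Complex.ofReal_ne_zero.mpr Real.pi_ne_zero
      field_simp
      ring
    rw [this, Complex.exp_mul_I, ← Complex.ofReal_cos, ← Complex.ofReal_sin]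
    congr 2
    rw [show (k:ℝ) * x - a * Real.sin x = -(a * Real.sin x - (k:ℝ) * x) by ring, Real.cos_neg]
  have hb : -π + 2 * π = π := by ring
  rw [hb, intervalIntegral.integral_congr (g := fun x : ℝ =>
      ((Real.cos (k * x - a * Real.sin x) : ℝ) : ℂ)
        + ((Real.sin (a * Real.sin x - k * x) : ℝ) : ℂ) * Complex.I)
      (fun x _ => hint x)]
  have i1 : IntervalIntegrable (fun x : ℝ => ((Real.cos (k * x - a * Real.sin x) : ℝ) : ℂ))
      volume (-π) π := by apply Continuous.intervalIntegrable; fun_prop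
  have i2 : IntervalIntegrable
      (fun x : ℝ => ((Real.sin (a * Real.sin x - k * x) : ℝ) : ℂ) * Complex.I)
      volume (-π) π := by apply Continuous.intervalIntegrable; fun_prop
  rw [intervalIntegral.integral_add i1 i2, intervalIntegral.integral_mul_const,
    intervalIntegral.integral_ofReal, intervalIntegral.integral_ofReal,
    odd_int, even_int, besselJ]
  push_cast
  have hπ : (π:ℂ) ≠ 0 := Complex.ofReal_ne_zero.mpr Real.pi_ne_zero
  rw [real_smul]
  push_cast
  field_simp
  ring

noncomputable def f0 (a : ℝ) (t : ℝ) : ℂ := Complex.exp ((a * Real.sin t : ℝ) * Complex.I)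
noncomputable def f1 (a : ℝ) (t : ℝ) : ℂ := ((a * Real.cos t : ℝ) * Complex.I) * f0 a t
noncomputable def f2 (a : ℝ) (t : ℝ) : ℂ :=
  ((-(a * Real.sin t) : ℝ) * Complex.I) * f0 a t + ((a * Real.cos t : ℝ) * Complex.I) * f1 a t

lemma hasDerivAt_inner (a t : ℝ) :
    HasDerivAt (fun t : ℝ => ((a * Real.sin t : ℝ) * Complex.I))
      ((a * Real.cos t : ℝ) * Complex.I) t := by
  have hs : HasDerivAt (fun t : ℝ => Complex.sin (t : ℂ)) (Complex.cos t) t :=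
    (Complex.hasDerivAt_sin (t : ℂ)).comp_ofReal
  have := (hs.const_mul (a : ℂ)).mul_const Complex.I
  convert this using 2 with t
  · rfl
  · push_cast; ring
  · push_cast; ring

lemma hasDerivAt_f0 (a t : ℝ) : HasDerivAt (f0 a) (f1 a t) t := by
  have h := (hasDerivAt_inner a t).cexp
  show HasDerivAt (f0 a) (((a * Real.cos t : ℝ) * Complex.I) * f0 a t) t
  rw [mul_comm]
  exact h

lemma hasDerivAt_f1 (a t : ℝ) : HasDerivAt (f1 a) (f2 a t) t := by
  have hu : HasDerivAt (fun t : ℝ => ((a * Real.cos t : ℝ) * Complex.I))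
      ((-(a * Real.sin t) : ℝ) * Complex.I) t := by
    have hs : HasDerivAt (fun t : ℝ => Complex.cos (t : ℂ)) (-Complex.sin t) t :=
      (Complex.hasDerivAt_cos (t : ℂ)).comp_ofReal
    have := (hs.const_mul (a : ℂ)).mul_const Complex.I
    convert this using 2 with t
    · rfl
    · push_cast; ring
    · push_cast; ring
  exact hu.mul (hasDerivAt_f0 a t)

lemma norm_f0 (a t : ℝ) : ‖f0 a t‖ = 1 := by
  rw [f0, Complex.norm_exp]
  simp

lemma norm_f1_le (a t : ℝ) : ‖f1 a t‖ ≤ |a| := by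
  rw [f1, norm_mul, norm_mul, norm_f0]
  simp only [Complex.norm_I, mul_one, Complex.norm_real, Real.norm_eq_abs, abs_mul]
  calc |a| * |Real.cos t| ≤ |a| * 1 := by gcongr; exact Real.abs_cos_le_one t
    _ = |a| := mul_one _

lemma norm_f2_le (a t : ℝ) : ‖f2 a t‖ ≤ |a| + |a| * |a| := by
  have h1 := norm_f1_le a t
  calc ‖f2 a t‖ ≤ ‖((-(a * Real.sin t) : ℝ) * Complex.I) * f0 a t‖
        + ‖((a * Real.cos t : ℝ) * Complex.I) * f1 a t‖ := norm_add_le _ _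
    _ ≤ |a| + |a| * |a| := by
        gcongr ?_ + ?_
        · rw [norm_mul, norm_mul, norm_f0]
          simp only [Complex.norm_I, mul_one, Complex.norm_real, Real.norm_eq_abs, abs_neg, abs_mul]
          calc |a| * |Real.sin t| ≤ |a| * 1 := by gcongr; exact Real.abs_sin_le_one t
            _ = |a| := mul_one _
        · rw [norm_mul, norm_mul]
          simp only [Complex.norm_I, mul_one, Complex.norm_real, Real.norm_eq_abs, abs_mul]
          calc |a| * |Real.cos t| * ‖f1 a t‖ ≤ |a| * 1 * |a| := by
                gcongr
                exact Real.abs_cos_le_one t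
            _ = |a| * |a| := by ring

lemma norm_fourier_pt (n : ℤ) (z : AddCircle (2*π)) : ‖fourier n z‖ = 1 := by
  rw [fourier_apply, Circle.norm_coe]

lemma cont_f0 (a : ℝ) : Continuous (f0 a) := by unfold f0; fun_prop
lemma cont_f1 (a : ℝ) : Continuous (f1 a) := by unfold f1 f0; fun_prop
lemma cont_f2 (a : ℝ) : Continuous (f2 a) := by unfold f2 f1 f0; fun_prop

lemma gfun_eq_liftIoc (a : ℝ) :
    ⇑(gfun a) = AddCircle.liftIoc (2*π) (-π) (f0 a) := by
  funext z
  obtain ⟨x, hx⟩ := (AddCircle.equivIoc (2*π) (-π)).symm.surjective z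
  have hmem := x.2
  have hz : ((x : ℝ) : AddCircle (2*π)) = z := by rw [← hx]; rfl
  rw [← hz, gfun_coe, AddCircle.liftIoc_coe_apply hmem, f0]

lemma norm_fourierCoeff_gfun_le (a : ℝ) (k : ℤ) (hk : k ≠ 0) :
    ‖fourierCoeff (⇑(gfun a)) k‖ ≤ (|a| + |a| * |a|) / (k:ℝ)^2 := by
  have hπ : (0:ℝ) < π := Real.pi_pos
  have hab : -π < -π + 2*π := by linarith
  have hg : fourierCoeff (⇑(gfun a)) k = fourierCoeffOn hab (f0 a) k := by
    rw [gfun_eq_liftIoc, fourierCoeff_liftIoc_eq]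
  have hπC : (π:ℂ) ≠ 0 := Complex.ofReal_ne_zero.mpr Real.pi_ne_zero
  have hkC : (k:ℂ) ≠ 0 := Int.cast_ne_zero.mpr hk
  have h0 := fourierCoeffOn_of_hasDerivAt hab hk
    (f := f0 a) (f' := f1 a) (fun t _ => hasDerivAt_f0 a t)
    ((cont_f1 a).intervalIntegrable _ _)
  have h1 := fourierCoeffOn_of_hasDerivAt hab hk
    (f := f1 a) (f' := f2 a) (fun t _ => hasDerivAt_f1 a t)
    ((cont_f2 a).intervalIntegrable _ _)
  have e0 : f0 a (-π + 2*π) - f0 a (-π) = 0 := by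
    have h : -π + 2*π = π := by ring
    rw [h]
    simp [f0, Real.sin_pi, Real.sin_neg]
  have e1 : f1 a (-π + 2*π) - f1 a (-π) = 0 := by
    have h : -π + 2*π = π := by ring
    rw [h]
    simp [f1, f0, Real.sin_pi, Real.sin_neg, Real.cos_pi, Real.cos_neg]
  rw [e0] at h0
  rw [e1] at h1
  set c0 := fourierCoeffOn hab (f0 a) k with hc0def
  set c1 := fourierCoeffOn hab (f1 a) k with hc1def
  set c2 := fourierCoeffOn hab (f2 a) k with hc2def
  have hc0 : c0 = (1 / (Complex.I * k)) * c1 := by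
    rw [h0]
    push_cast
    field_simp
    ring
  have hc1 : c1 = (1 / (Complex.I * k)) * c2 := by
    rw [h1]
    push_cast
    field_simp
    ring
  have hnIk : ‖(1:ℂ) / (Complex.I * k)‖ = 1 / |(k:ℝ)| := by
    rw [norm_div, norm_one, norm_mul, Complex.norm_I, one_mul]
    norm_cast
  have hc2norm : ‖c2‖ ≤ |a| + |a| * |a| := by
    rw [hc2def, fourierCoeffOn_eq_integral, norm_smul]
    have hbound : ∀ t ∈ Set.uIoc (-π) (-π + 2*π),
        ‖fourier (-k) (t : AddCircle (-π + 2*π - -π)) • f2 a t‖ ≤ |a| + |a| * |a| := by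
      intro t _
      rw [norm_smul]
      have h : ‖fourier (-k) (t : AddCircle (-π + 2*π - -π))‖ = 1 := by
        rw [show -π + 2*π - -π = 2*π by ring]
        exact norm_fourier_pt (-k) _
      rw [h, one_mul]
      exact norm_f2_le a t
    have hInt := intervalIntegral.norm_integral_le_of_norm_le_const hbound
    have hstep : ‖(1/(-π + 2*π - -π) : ℝ)‖ * ‖∫ t in (-π)..(-π + 2*π),
            fourier (-k) (t : AddCircle (-π + 2*π - -π)) • f2 a t‖
        ≤ ‖(1/(-π + 2*π - -π) : ℝ)‖ * ((|a| + |a| * |a|) * |(-π + 2*π) - -π|) := by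
      gcongr
    refine hstep.trans (le_of_eq ?_)
    rw [Real.norm_eq_abs, show -π + 2*π - -π = 2*π by ring]
    rw [abs_of_pos (by positivity : (0:ℝ) < 1/(2*π)), abs_of_pos (by positivity : (0:ℝ) < 2*π)]
    field_simp
  have hknorm : (0:ℝ) < |(k:ℝ)| := by
    simp only [abs_pos, ne_eq, Int.cast_eq_zero]
    exact hk
  have hk2 : |(k:ℝ)| * |(k:ℝ)| = (k:ℝ)^2 := by rw [abs_mul_abs_self, sq]
  calc ‖fourierCoeff (⇑(gfun a)) k‖ = ‖c0‖ := by rw [hg]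
    _ = (1/|(k:ℝ)|) * ‖c1‖ := by rw [hc0, norm_mul, hnIk]
    _ = (1/|(k:ℝ)|) * ((1/|(k:ℝ)|) * ‖c2‖) := by rw [hc1, norm_mul, hnIk]
    _ ≤ (1/|(k:ℝ)|) * ((1/|(k:ℝ)|) * (|a| + |a| * |a|)) := by gcongr
    _ = (|a| + |a| * |a|) / (k:ℝ)^2 := by
        rw [← hk2]
        field_simp

lemma summable_norm_fourierCoeff_gfun (a : ℝ) :
    Summable (fun k : ℤ => ‖fourierCoeff (⇑(gfun a)) k‖) := by
  set C := |a| + |a| * |a| with hC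
  have hC0 : 0 ≤ C := by positivity
  have hB1 : Summable (fun k : ℤ => C * (1 / (k:ℝ)^2)) :=
    (Real.summable_one_div_int_pow.mpr (by norm_num)).mul_left C
  have hB2 : Summable (fun k : ℤ =>
      if k = 0 then ‖fourierCoeff (⇑(gfun a)) 0‖ else 0) := by
    apply summable_of_ne_finset_zero (s := {0})
    intro b hb
    simp only [Finset.mem_singleton] at hb
    simp [hb]
  apply Summable.of_nonneg_of_le (fun k => norm_nonneg _) _ (hB1.add hB2)
  intro k
  by_cases hk : k = 0
  · subst hk
    simp
  · have := norm_fourierCoeff_gfun_le a k hk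
    simp only [if_neg hk, add_zero]
    calc ‖fourierCoeff (⇑(gfun a)) k‖ ≤ C / (k:ℝ)^2 := this
      _ = C * (1 / (k:ℝ)^2) := by ring

lemma summable_abs_besselJ (a : ℝ) : Summable (fun k : ℤ => |besselJ k a|) := by
  refine (summable_norm_fourierCoeff_gfun a).congr fun k => ?_
  rw [fourierCoeff_gfun, Complex.norm_real, Real.norm_eq_abs]

lemma jacobiAnger (a θ : ℝ) :
    HasSum (fun k : ℤ => ((besselJ k a : ℝ) : ℂ) * Complex.exp (((k : ℝ) * θ : ℝ) * Complex.I))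
      (Complex.exp ((a * Real.sin θ : ℝ) * Complex.I)) := by
  have hsum : Summable (fourierCoeff (⇑(gfun a))) :=
    Summable.of_norm (summable_norm_fourierCoeff_gfun a)
  have h := has_pointwise_sum_fourier_series_of_summable hsum ((θ : ℝ) : AddCircle (2*π))
  rw [gfun_coe] at h
  refine h.congr_fun fun k => ?_
  rw [fourierCoeff_gfun, fourier_coe_apply, smul_eq_mul]
  have hπ : (π:ℂ) ≠ 0 := Complex.ofReal_ne_zero.mpr Real.pi_ne_zero
  congr 1
  push_cast
  congr 1
  rw [eq_div_iff (by simpa using hπ : (2*(π:ℂ)) ≠ 0)]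
  ring

lemma amp_cons {n : ℕ} (a : Fin (n+1) → ℝ) (k0 : ℤ) (k : Fin n → ℤ) :
    amp a (Fin.cons k0 k) = besselJ k0 (a 0) * amp (a ∘ Fin.succ) k := by
  rw [amp, Fin.prod_univ_succ]
  simp [amp, Function.comp]

lemma norm_real_mul_exp (r u : ℝ) :
    ‖((r : ℝ) : ℂ) * Complex.exp ((u : ℝ) * Complex.I)‖ = |r| := by
  rw [norm_mul, Complex.norm_exp_ofReal_mul_I,
    mul_one, Complex.norm_real, Real.norm_eq_abs]

lemma summable_abs_amp (n : ℕ) (a : Fin n → ℝ) :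
    Summable (fun k : Fin n → ℤ => |amp a k|) := by
  induction n with
  | zero => exact Summable.of_finite
  | succ n ih =>
    refine (Equiv.summable_iff (Fin.consEquiv (fun _ : Fin (n+1) => ℤ))).mp ?_
    refine (((summable_abs_besselJ (a 0)).mul_of_nonneg (ih (a ∘ Fin.succ))
      (fun k => abs_nonneg _) (fun k => abs_nonneg _)).congr fun p => ?_)
    obtain ⟨k0, k⟩ := p
    show _ = |amp a (Fin.cons k0 k)|
    rw [amp_cons, abs_mul]

lemma multi_hasSum (n : ℕ) (a θ : Fin n → ℝ) :
    HasSum (fun k : Fin n → ℤ =>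
        ((amp a k : ℝ) : ℂ) * Complex.exp (((∑ i, (k i : ℝ) * θ i) : ℝ) * Complex.I))
      (Complex.exp (((∑ i, a i * Real.sin (θ i)) : ℝ) * Complex.I)) := by
  induction n with
  | zero =>
    have h := hasSum_ite_eq (default : Fin 0 → ℤ)
      (((amp a (default : Fin 0 → ℤ) : ℝ) : ℂ)
        * Complex.exp (((∑ i, ((default : Fin 0 → ℤ) i : ℝ) * θ i) : ℝ) * Complex.I))
    have h2 := h.congr_fun (g := fun k : Fin 0 → ℤ =>
        ((amp a k : ℝ) : ℂ) * Complex.exp (((∑ i, (k i : ℝ) * θ i) : ℝ) * Complex.I))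
      (fun k => by rw [Subsingleton.elim k default, if_pos rfl])
    simpa [amp] using h2
  | succ n ih =>
    have h0 := jacobiAnger (a 0) (θ 0)
    have ihn := ih (a ∘ Fin.succ) (θ ∘ Fin.succ)
    have hsummable : Summable (fun p : ℤ × (Fin n → ℤ) =>
        (((besselJ p.1 (a 0) : ℝ) : ℂ) * Complex.exp (((p.1 : ℝ) * θ 0 : ℝ) * Complex.I)) *
        (((amp (a ∘ Fin.succ) p.2 : ℝ) : ℂ)
          * Complex.exp (((∑ i, (p.2 i : ℝ) * (θ ∘ Fin.succ) i) : ℝ) * Complex.I))) := by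
      apply Summable.of_norm
      refine (((summable_abs_besselJ (a 0)).mul_of_nonneg
          (summable_abs_amp n (a ∘ Fin.succ)) (fun _ => abs_nonneg _)
          (fun _ => abs_nonneg _)).congr fun p => ?_)
      rw [norm_mul, norm_real_mul_exp, norm_real_mul_exp]
    have hmul := h0.mul ihn hsummable
    rw [← Equiv.hasSum_iff (Fin.consEquiv (fun _ : Fin (n+1) => ℤ))]
    have hfun : (fun k : Fin (n+1) → ℤ =>
          ((amp a k : ℝ) : ℂ) * Complex.exp (((∑ i, (k i : ℝ) * θ i) : ℝ) * Complex.I))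
          ∘ (Fin.consEquiv (fun _ : Fin (n+1) => ℤ))
        = fun p : ℤ × (Fin n → ℤ) =>
        (((besselJ p.1 (a 0) : ℝ) : ℂ) * Complex.exp (((p.1 : ℝ) * θ 0 : ℝ) * Complex.I)) *
        (((amp (a ∘ Fin.succ) p.2 : ℝ) : ℂ)
          * Complex.exp (((∑ i, (p.2 i : ℝ) * (θ ∘ Fin.succ) i) : ℝ) * Complex.I)) := by
      funext p
      obtain ⟨k0, k⟩ := p
      show ((amp a (Fin.cons k0 k) : ℝ) : ℂ)
          * Complex.exp (((∑ i, ((Fin.cons k0 k : Fin (n+1) → ℤ) i : ℝ) * θ i) : ℝ) * Complex.I)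
        = _
      rw [amp_cons]
      have hsum : (∑ i, ((Fin.cons k0 k : Fin (n+1) → ℤ) i : ℝ) * θ i)
          = (k0 : ℝ) * θ 0 + ∑ i, (k i : ℝ) * (θ ∘ Fin.succ) i := by
        rw [Fin.sum_univ_succ]
        simp [Function.comp]
      rw [hsum, Complex.ofReal_add, add_mul, Complex.exp_add]
      push_cast
      ring
    rw [hfun]
    have htarget : (((∑ i, a i * Real.sin (θ i)) : ℝ) : ℂ) * Complex.I
        = ((a 0 * Real.sin (θ 0) : ℝ) : ℂ) * Complex.I
          + (((∑ i, (a ∘ Fin.succ) i * Real.sin ((θ ∘ Fin.succ) i)) : ℝ) : ℂ) * Complex.I := by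
      rw [Fin.sum_univ_succ]
      push_cast
      simp only [Function.comp_apply]
      ring
    rw [htarget, Complex.exp_add]
    exact hmul

lemma im_term (r u v : ℝ) :
    (((r : ℝ) : ℂ) * Complex.exp ((u : ℝ) * Complex.I) * Complex.exp ((v : ℝ) * Complex.I)).im
      = r * Real.sin (u + v) := by
  rw [mul_assoc, ← Complex.exp_add,
    show ((u:ℝ):ℂ) * Complex.I + ((v:ℝ):ℂ) * Complex.I = ((u + v : ℝ) : ℂ) * Complex.I by
      push_cast; ring,
    Complex.mul_im, Complex.exp_ofReal_mul_I_im, Complex.exp_ofReal_mul_I_re]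
  simp

lemma im_exp_exp (u v : ℝ) :
    (Complex.exp ((u : ℝ) * Complex.I) * Complex.exp ((v : ℝ) * Complex.I)).im
      = Real.sin (u + v) := by
  have := im_term 1 u v
  simpa using this

theorem sinusoidal_neuron_sine_cosine_form (n : ℕ) (hn : 1 ≤ n)
    (a ω φ : Fin n → ℝ) (b x : ℝ) :
    Summable (fun k : Fin n → ℤ =>
      (amp a k * Real.sin ((∑ i, (k i : ℝ) * φ i) + b)) *
          Real.cos ((∑ i, (k i : ℝ) * ω i) * x) +
        (amp a k * Real.cos ((∑ i, (k i : ℝ) * φ i) + b)) *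
          Real.sin ((∑ i, (k i : ℝ) * ω i) * x)) ∧
    Real.sin ((∑ i, a i * Real.sin (ω i * x + φ i)) + b) =
      ∑' k : Fin n → ℤ,
        ((amp a k * Real.sin ((∑ i, (k i : ℝ) * φ i) + b)) *
            Real.cos ((∑ i, (k i : ℝ) * ω i) * x) +
          (amp a k * Real.cos ((∑ i, (k i : ℝ) * φ i) + b)) *
            Real.sin ((∑ i, (k i : ℝ) * ω i) * x)) := by
  have H := (multi_hasSum n a (fun i => ω i * x + φ i)).mul_right
    (Complex.exp ((b : ℝ) * Complex.I))
  have him := Complex.imCLM.hasSum H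
  simp only [Complex.imCLM_apply] at him
  rw [im_exp_exp] at him
  have h2 : HasSum (fun k : Fin n → ℤ =>
      amp a k * Real.sin ((∑ i, (k i : ℝ) * (ω i * x + φ i)) + b))
      (Real.sin ((∑ i, a i * Real.sin (ω i * x + φ i)) + b)) := by
    refine him.congr_fun fun k => ?_
    exact (im_term (amp a k) (∑ i, (k i : ℝ) * (ω i * x + φ i)) b).symm
  have h3 : HasSum (fun k : Fin n → ℤ =>
      (amp a k * Real.sin ((∑ i, (k i : ℝ) * φ i) + b)) *
          Real.cos ((∑ i, (k i : ℝ) * ω i) * x) +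
        (amp a k * Real.cos ((∑ i, (k i : ℝ) * φ i) + b)) *
          Real.sin ((∑ i, (k i : ℝ) * ω i) * x))
      (Real.sin ((∑ i, a i * Real.sin (ω i * x + φ i)) + b)) := by
    refine h2.congr_fun fun k => ?_
    have hsplit : (∑ i, (k i : ℝ) * (ω i * x + φ i))
        = (∑ i, (k i : ℝ) * ω i) * x + ∑ i, (k i : ℝ) * φ i := by
      have h1 : ∀ i : Fin n, (k i : ℝ) * (ω i * x + φ i)
          = (k i : ℝ) * ω i * x + (k i : ℝ) * φ i := fun i => by ring
      simp_rw [h1, Finset.sum_add_distrib, ← Finset.sum_mul]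
    rw [hsplit, add_assoc ((∑ i, (k i : ℝ) * ω i) * x) _ b,
      Real.sin_add ((∑ i, (k i : ℝ) * ω i) * x) ((∑ i, (k i : ℝ) * φ i) + b)]
    ring
  exact ⟨h3.summable, h3.tsum_eq.symm⟩
end

section
/- (Sorting of Bessel amplitudes including index 0.) Let a ∈ ℝ with 0 < |a| ≤ 1, and let k, l ∈ ℤ with |k| < |l|. Then |J_k(a)| > |J_l(a)|; in particular |J_0(a)| > |J_1(a)|. -/
open Real

open MeasureTheory intervalIntegral
open scoped Nat

lemma intE (m : ℤ) : ∫ t in (-π:ℝ)..π, Complex.exp (m * t * Complex.I) =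
    if m = 0 then (2*π : ℂ) else 0 := by
  rcases eq_or_ne m 0 with h | h
  · simp [h, Complex.ofReal_neg]; norm_num; ring
  · have hc : (m : ℂ) * Complex.I ≠ 0 := by simp [Complex.I_ne_zero, h]
    have key := integral_exp_mul_complex (a := (-π:ℝ)) (b := π) hc
    simp only [if_neg h]
    rw [show (fun t : ℝ => Complex.exp ((m:ℂ) * t * Complex.I)) = fun t : ℝ => Complex.exp ((m * Complex.I) * t) by funext t; ring_nf]
    rw [key]
    have h1 : Complex.exp ((m:ℂ) * Complex.I * (π:ℝ)) = Complex.exp ((m:ℂ) * Complex.I * ((-π:ℝ):ℝ)) := by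
      have h2 : Complex.exp ((m:ℂ) * Complex.I * (π:ℝ)) =
          Complex.exp ((m:ℂ) * Complex.I * ((-π:ℝ):ℝ)) * Complex.exp ((m:ℂ) * (2 * π * Complex.I)) := by
        rw [← Complex.exp_add]; push_cast; ring_nf
      rw [h2, Complex.exp_int_mul_two_pi_mul_I, mul_one]
    rw [h1, sub_self, zero_div]

lemma besselJ_complex (k : ℤ) (a : ℝ) :
    besselJ k a = (1/(2*π)) * (∫ t in (-π:ℝ)..π,
      Complex.exp ((a * Real.sin t - k * t : ℝ) * Complex.I)).re := by
  have hcont : Continuous fun t : ℝ => Complex.exp ((a * Real.sin t - k * t : ℝ) * Complex.I) := by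
    fun_prop
  have hre : (∫ t in (-π:ℝ)..π, Complex.exp ((a * Real.sin t - k * t : ℝ) * Complex.I)).re
      = ∫ t in (-π:ℝ)..π, Real.cos (k * t - a * Real.sin t) := by
    rw [← Complex.reCLM_apply, ← Complex.reCLM.intervalIntegral_comp_comm (hcont.intervalIntegrable _ _)]
    congr 1; funext t
    rw [Complex.reCLM_apply, Complex.exp_ofReal_mul_I_re, ← Real.cos_neg]
    congr 1; ring
  rw [hre]
  have heven : ∫ t in (-π:ℝ)..π, Real.cos (k * t - a * Real.sin t)
      = 2 * ∫ t in (0:ℝ)..π, Real.cos (k * t - a * Real.sin t) := by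
    have h1 : ∫ t in (-π:ℝ)..(0:ℝ), Real.cos (k * t - a * Real.sin t)
        = ∫ t in (0:ℝ)..π, Real.cos (k * t - a * Real.sin t) := by
      have := intervalIntegral.integral_comp_neg (a := (0:ℝ)) (b := π)
        (fun t => Real.cos (k * t - a * Real.sin t))
      simp only [neg_zero] at this
      rw [← this]
      congr 1; funext t
      rw [Real.sin_neg, ← Real.cos_neg]
      congr 1; push_cast; ring
    rw [← intervalIntegral.integral_add_adjacent_intervals (a := (-π:ℝ)) (b := 0) (c := π)
      (by apply Continuous.intervalIntegrable; fun_prop)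
      (by apply Continuous.intervalIntegrable; fun_prop), h1]
    ring
  rw [heven, besselJ]
  have hπ : (π:ℝ) ≠ 0 := Real.pi_ne_zero
  field_simp

lemma besselJ_hasSum (n : ℕ) (a : ℝ) :
    HasSum (fun m : ℕ => (-1 : ℝ)^m * (a/2)^(n+2*m) / (m ! * (n+m)!)) (besselJ n a) := by
  set g : ℕ → ℝ → ℂ := fun q t =>
    (Complex.I * a * Complex.sin t)^q / q ! * Complex.exp (-(n:ℂ) * t * Complex.I) with hg
  -- pointwise sum
  have hpt : ∀ t : ℝ, HasSum (fun q => g q t)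
      (Complex.exp ((a * Real.sin t - (n:ℤ) * t : ℝ) * Complex.I)) := by
    intro t
    have h1 : HasSum (fun q => (Complex.I * a * Complex.sin t)^q / q !)
        (Complex.exp (Complex.I * a * Complex.sin t)) := by
      rw [Complex.exp_eq_exp_ℂ]; exact NormedSpace.expSeries_div_hasSum_exp _
    have h2 := h1.mul_right (Complex.exp (-(n:ℂ) * t * Complex.I))
    have h3 : Complex.exp ((a * Real.sin t - (n:ℤ) * t : ℝ) * Complex.I)
        = Complex.exp (Complex.I * a * Complex.sin t) * Complex.exp (-(n:ℂ) * t * Complex.I) := by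
      rw [← Complex.exp_add]
      congr 1
      push_cast [Complex.ofReal_sin]
      ring
    rw [h3]; exact h2
  -- rewrite g q t in exponential-sum form
  have hgrw : ∀ q : ℕ, ∀ t : ℝ, g q t = ((a:ℂ)/2)^q / q ! *
      ∑ j ∈ Finset.range (q+1), (Complex.exp (t * Complex.I))^j *
        (-Complex.exp (-(t:ℂ) * Complex.I))^(q-j) * (q.choose j) *
        Complex.exp (-(n:ℂ) * t * Complex.I) := by
    intro q t
    simp only [hg]
    have hsin : Complex.I * a * Complex.sin t
        = (a:ℂ)/2 * (Complex.exp (t * Complex.I) + -Complex.exp (-(t:ℂ) * Complex.I)) := by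
      rw [Complex.sin]
      linear_combination (a/2 * (Complex.exp (-(t:ℂ) * Complex.I) - Complex.exp ((t:ℂ) * Complex.I))) * Complex.I_sq
    rw [hsin, mul_pow, add_pow, Finset.mul_sum, Finset.sum_div, Finset.sum_mul, Finset.mul_sum]
    exact Finset.sum_congr rfl fun j _ => by ring
  -- value of ∫ g q
  have hint : ∀ q : ℕ, (∫ t in (-π:ℝ)..π, g q t) = ((a:ℂ)/2)^q / q ! *
      ∑ j ∈ Finset.range (q+1), (-1:ℂ)^(q-j) * (q.choose j) *
        (if (2*(j:ℤ) - q - n = 0) then (2*π:ℂ) else 0) := by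
    intro q
    have : ∀ t : ℝ, g q t = ∑ j ∈ Finset.range (q+1),
        ((a:ℂ)/2)^q / q ! * ((-1:ℂ)^(q-j) * (q.choose j) *
          Complex.exp (((2*(j:ℤ) - q - n : ℤ) : ℂ) * t * Complex.I)) := by
      intro t
      rw [hgrw q t, Finset.mul_sum]
      apply Finset.sum_congr rfl; intro j hj
      have hjq : j ≤ q := Nat.lt_succ_iff.mp (Finset.mem_range.mp hj)
      have e1 : (Complex.exp (t * Complex.I))^j = Complex.exp ((j:ℂ) * t * Complex.I) := by
        rw [← Complex.exp_nat_mul]; ring_nf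
      have e2 : (-Complex.exp (-(t:ℂ) * Complex.I))^(q-j)
          = (-1:ℂ)^(q-j) * Complex.exp (-((q-j : ℕ):ℂ) * t * Complex.I) := by
        rw [neg_pow, ← Complex.exp_nat_mul]; ring_nf
      rw [e1, e2]
      rw [show ((2*(j:ℤ) - q - n : ℤ) : ℂ) * t * Complex.I
          = (j:ℂ) * t * Complex.I + (-((q-j : ℕ):ℂ) * t * Complex.I + -(n:ℂ) * t * Complex.I) by
        push_cast [Nat.cast_sub hjq]; ring]
      rw [Complex.exp_add, Complex.exp_add]
      ring
    rw [intervalIntegral.integral_congr (fun t _ => this t)]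
    rw [intervalIntegral.integral_finset_sum (fun j _ => by
      apply Continuous.intervalIntegrable; fun_prop)]
    rw [Finset.mul_sum]
    apply Finset.sum_congr rfl; intro j hj
    rw [intervalIntegral.integral_const_mul]
    rw [intervalIntegral.integral_const_mul]
    rw [intE (2*(j:ℤ) - q - n)]
  -- integrability and summability of norms
  have hμ : ∀ q : ℕ, IntervalIntegrable (g q) volume (-π) π := fun q => by
    apply Continuous.intervalIntegrable; rw [hg]; fun_prop
  have hle : -π ≤ π := by linarith [Real.pi_pos]
  have hnorm : ∀ q : ℕ, ∀ t : ℝ, ‖g q t‖ ≤ |a|^q / q ! := by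
    intro q t
    simp only [hg]
    rw [norm_mul, norm_div, norm_pow]
    have h2 : ‖Complex.exp (-(n:ℂ) * t * Complex.I)‖ = 1 := by
      rw [Complex.norm_exp]
      simp
    have h1 : ‖Complex.I * (a:ℂ) * Complex.sin t‖ ≤ |a| := by
      rw [norm_mul, norm_mul, Complex.norm_I, one_mul, Complex.norm_real, Real.norm_eq_abs,
        ← Complex.ofReal_sin, Complex.norm_real, Real.norm_eq_abs]
      calc |a| * |Real.sin t| ≤ |a| * 1 :=
            mul_le_mul_of_nonneg_left (abs_le.mpr ⟨Real.neg_one_le_sin t, Real.sin_le_one t⟩) (abs_nonneg a)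
        _ = |a| := mul_one _
    have hq : ‖((q ! : ℕ) : ℂ)‖ = ((q ! : ℕ) : ℝ) := Complex.norm_natCast _
    rw [h2, mul_one, hq]
    have h4 : (0:ℝ) < ((q ! : ℕ) : ℝ) := by positivity
    exact div_le_div_of_nonneg_right (pow_le_pow_left₀ (norm_nonneg _) h1 q) h4.le
  -- set measure
  set μ : Measure ℝ := volume.restrict (Set.Ioc (-π) π) with hμdef
  haveI : IsFiniteMeasure μ := by
    constructor
    rw [hμdef, Measure.restrict_apply_univ]
    exact measure_Ioc_lt_top
  have hμuniv : (μ Set.univ).toReal = 2*π := by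
    rw [hμdef, Measure.restrict_apply_univ, Real.volume_Ioc,
      ENNReal.toReal_ofReal (by linarith [Real.pi_pos])]
    ring
  have hInt : ∀ q, Integrable (g q) μ := fun q => (hμ q).1
  have hSummable : Summable (fun q => ∫ t, ‖g q t‖ ∂μ) := by
    apply Summable.of_nonneg_of_le (fun q => integral_nonneg (fun t => norm_nonneg _))
      (fun q => ?_) (((Real.summable_pow_div_factorial |a|).mul_left (2*π)))
    calc (∫ t, ‖g q t‖ ∂μ) ≤ ∫ _t, |a|^q / q ! ∂μ := by
          apply integral_mono ((hInt q).norm) (integrable_const _) (fun t => hnorm q t)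
      _ = 2*π * (|a|^q / q !) := by rw [MeasureTheory.integral_const, measureReal_def, hμuniv, smul_eq_mul]
  have hsum := hasSum_integral_of_summable_integral_norm hInt hSummable
  -- identify the total integral
  have htot : (∫ t, ∑' q, g q t ∂μ)
      = ∫ t in (-π:ℝ)..π, Complex.exp ((a * Real.sin t - ((n:ℤ):ℝ) * t : ℝ) * Complex.I) := by
    rw [intervalIntegral.integral_of_le hle]
    apply setIntegral_congr_fun measurableSet_Ioc
    intro t _
    exact (hpt t).tsum_eq
  rw [htot] at hsum
  have hIq : ∀ q, (∫ t, g q t ∂μ) = ∫ t in (-π:ℝ)..π, g q t := fun q =>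
    (intervalIntegral.integral_of_le hle).symm
  -- reindex
  set c : ℕ → ℂ := fun m => ((2*π*((-1:ℝ)^m * (a/2)^(n+2*m) / (m ! * (n+m)!)) : ℝ) : ℂ) with hc
  set T : ℂ := ∫ t in (-π:ℝ)..π, Complex.exp ((a * Real.sin t - ((n:ℤ):ℝ) * t : ℝ) * Complex.I) with hT
  have hvanish : ∀ q, q ∉ Set.range (fun m : ℕ => n + 2*m) → (∫ t, g q t ∂μ) = 0 := by
    intro q hq
    rw [hIq, hint q]
    have : ∀ j ∈ Finset.range (q+1), (-1:ℂ)^(q-j) * (q.choose j) *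
        (if (2*(j:ℤ) - q - n = 0) then (2*π:ℂ) else 0) = 0 := by
      intro j hj
      have hjq : j ≤ q := Nat.lt_succ_iff.mp (Finset.mem_range.mp hj)
      have hne : ¬(2*(j:ℤ) - q - n = 0) := by
        intro h
        apply hq
        refine ⟨j - n, ?_⟩
        show n + 2*(j - n) = q
        omega
      rw [if_neg hne, mul_zero]
    rw [Finset.sum_eq_zero this, mul_zero]
  have hval : ∀ m : ℕ, (∫ t, g (n + 2*m) t ∂μ) = c m := by
    intro m
    rw [hIq, hint (n + 2*m)]
    have hsingle : ∑ j ∈ Finset.range (n+2*m+1), (-1:ℂ)^((n+2*m)-j) * ((n+2*m).choose j) *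
        (if (2*(j:ℤ) - ((n+2*m : ℕ) : ℤ) - (n:ℤ) = 0) then (2*π:ℂ) else 0)
        = (-1:ℂ)^m * ((n+2*m).choose (n+m)) * (2*π) := by
      rw [Finset.sum_eq_single (n+m)]
      · rw [if_pos (by push_cast; ring), show (n+2*m)-(n+m) = m by omega]
      · intro j hj hne
        rw [if_neg (by intro h; apply hne; omega), mul_zero]
      · intro h
        exact absurd (Finset.mem_range.mpr (by omega)) h
    rw [hsingle]
    simp only [hc]
    have hch : ((n+2*m).choose (n+m) : ℂ) * ((n+m)! : ℂ) * (m ! : ℂ) = ((n+2*m)! : ℂ) := by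
      have := Nat.choose_mul_factorial_mul_factorial (show n+m ≤ n+2*m by omega)
      rw [show (n+2*m)-(n+m) = m by omega] at this
      exact_mod_cast congrArg (Nat.cast : ℕ → ℂ) this
    have hfac1 : ((m ! : ℕ) : ℂ) ≠ 0 := Nat.cast_ne_zero.mpr (Nat.factorial_ne_zero _)
    have hfac2 : (((n+m)! : ℕ) : ℂ) ≠ 0 := Nat.cast_ne_zero.mpr (Nat.factorial_ne_zero _)
    have hfac3 : (((n+2*m)! : ℕ) : ℂ) ≠ 0 := Nat.cast_ne_zero.mpr (Nat.factorial_ne_zero _)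
    have hCC : (((n+2*m).choose (n+m) : ℕ) : ℂ) = ((n+2*m)! : ℂ) / (((n+m)! : ℂ) * ((m ! : ℕ) : ℂ)) := by
      field_simp
      linear_combination hch
    rw [hCC]
    push_cast
    field_simp
  have hinj : Function.Injective (fun m : ℕ => n + 2*m) := by
    intro x y h
    have h' : n + 2*x = n + 2*y := h
    omega
  have hcomp : HasSum (fun m => (∫ t, g (n + 2*m) t ∂μ)) T :=
    (hinj.hasSum_iff hvanish).mpr hsum
  have hcsum : HasSum c T := by
    rw [show c = fun m => (∫ t, g (n + 2*m) t ∂μ) from funext fun m => (hval m).symm]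
    exact hcomp
  -- take real parts
  have hre := Complex.hasSum_re hcsum
  have hre2 : HasSum (fun m => 2*π*((-1:ℝ)^m * (a/2)^(n+2*m) / (m ! * (n+m)!))) T.re := by
    have heq : (fun m => (c m).re)
        = fun m => 2*π*((-1:ℝ)^m * (a/2)^(n+2*m) / (m ! * (n+m)!)) := by
      funext m
      simp only [hc, Complex.ofReal_re]
    rwa [heq] at hre
  have hfinal := hre2.mul_left (1/(2*π))
  have hπ : (π:ℝ) ≠ 0 := Real.pi_ne_zero
  have : (fun m => (1/(2*π)) * (2*π*((-1:ℝ)^m * (a/2)^(n+2*m) / (m ! * (n+m)!))))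
      = fun m => (-1:ℝ)^m * (a/2)^(n+2*m) / (m ! * (n+m)!) := by
    funext m; field_simp
  rw [this] at hfinal
  have hbc : besselJ (n:ℤ) a = (1/(2*π)) * T.re := by
    rw [besselJ_complex (n:ℤ) a, hT]
  rw [hbc]
  exact hfinal

lemma besselJ_neg_arg (k : ℤ) (a : ℝ) : besselJ k (-a) = Real.cos (k*π) * besselJ k a := by
  have key : ∫ t in (0:ℝ)..π, Real.cos (k * t - (-a) * Real.sin t)
      = Real.cos (k*π) * ∫ t in (0:ℝ)..π, Real.cos (k * t - a * Real.sin t) := by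
    have h1 := intervalIntegral.integral_comp_sub_left (a := (0:ℝ)) (b := π)
      (fun t => Real.cos (k * t - (-a) * Real.sin t)) π
    simp only [sub_self, sub_zero] at h1
    rw [← h1]
    have h2 : ∀ t : ℝ, Real.cos (k * (π - t) - (-a) * Real.sin (π - t))
        = Real.cos (k*π) * Real.cos (k * t - a * Real.sin t) := by
      intro t
      rw [Real.sin_pi_sub]
      rw [show (k:ℝ) * (π - t) - (-a) * Real.sin t = k*π - (k*t - a*Real.sin t) by ring]
      rw [Real.cos_sub, Real.sin_int_mul_pi, zero_mul, add_zero]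
    rw [intervalIntegral.integral_congr (fun t _ => h2 t), intervalIntegral.integral_const_mul]
  unfold besselJ
  rw [key]
  ring

lemma besselJ_neg_order (k : ℤ) (a : ℝ) : besselJ (-k) a = besselJ k (-a) := by
  unfold besselJ
  congr 1
  apply intervalIntegral.integral_congr
  intro t _
  show Real.cos ((-k : ℤ) * t - a * Real.sin t) = Real.cos (k * t - (-a) * Real.sin t)
  rw [← Real.cos_neg]
  congr 1
  push_cast
  ring

lemma besselJ_abs_natAbs (k : ℤ) (a : ℝ) : |besselJ k a| = |besselJ (k.natAbs : ℤ) a| := by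
  rcases Int.natAbs_eq k with h | h
  · rw [← h]
  · conv_lhs => rw [h]
    rw [besselJ_neg_order, besselJ_neg_arg, abs_mul, Real.abs_cos_int_mul_pi, one_mul]

lemma besselJ_abs_abs (k : ℤ) (a : ℝ) : |besselJ k a| = |besselJ k (|a|)| := by
  rcases abs_cases a with ⟨h, _⟩ | ⟨h, _⟩
  · rw [h]
  · rw [h, besselJ_neg_arg, abs_mul, Real.abs_cos_int_mul_pi, one_mul]

lemma besselJ_est (n : ℕ) (b : ℝ) (hb0 : 0 < b) (hb1 : b ≤ 1) :
    |besselJ n b - (b/2)^n / n !| ≤ (b/2)^n / n ! / (3*(n+1)) := by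
  set t0 : ℝ := (b/2)^n / n ! with ht0
  set r : ℝ := 1/(4*(n+1)) with hr
  have hf := besselJ_hasSum n b
  set f : ℕ → ℝ := fun m => (-1 : ℝ)^m * (b/2)^(n+2*m) / (m ! * (n+m)!) with hfdef
  have hf0 : f 0 = t0 := by simp [hfdef, ht0]
  have htail : HasSum (fun m => f (m+1)) (besselJ n b - t0) := by
    have := (hasSum_nat_add_iff' (f := f) 1).mpr hf
    simpa [hf0] using this
  have ht0pos : 0 < t0 := by rw [ht0]; positivity
  have hbound : ∀ m : ℕ, |f (m+1)| ≤ (t0 * r) * r^m := by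
    intro m
    have h1 : |f (m+1)| = (b/2)^(n+2*(m+1)) / ((m+1)! * (n+(m+1))!) := by
      rw [hfdef, abs_div, abs_mul, abs_pow, abs_neg, abs_one, one_pow, one_mul]
      rw [abs_of_nonneg (by positivity : (0:ℝ) ≤ (b/2)^(n+2*(m+1)))]
      congr 1
      rw [abs_of_nonneg (by positivity)]
    rw [h1]
    have hsplit : (b/2)^(n+2*(m+1)) = (b/2)^n * ((b/2)^2)^(m+1) := by
      rw [← pow_mul, ← pow_add]
    rw [hsplit]
    have hq : ((b/2)^2)^(m+1) ≤ (1/4)^(m+1) := by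
      apply pow_le_pow_left₀ (by positivity)
      nlinarith
    have hfact : ((n !:ℕ) : ℝ) * ((n:ℝ)+1)^(m+1) ≤ (((n+(m+1))! : ℕ) : ℝ) := by
      have h := Nat.factorial_mul_pow_le_factorial (m := n) (n := m+1)
      calc ((n ! : ℕ):ℝ) * ((n:ℝ)+1)^(m+1) = (((n ! * (n+1)^(m+1) : ℕ)):ℝ) := by push_cast; ring
        _ ≤ _ := by exact_mod_cast Nat.cast_le.mpr h
    have hm1 : (1:ℝ) ≤ (((m+1)! : ℕ) : ℝ) := by
      exact_mod_cast Nat.one_le_iff_ne_zero.mpr (Nat.factorial_ne_zero _)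
    have hnfpos : (0:ℝ) < ((n ! : ℕ) : ℝ) := by positivity
    have hd2 : (0:ℝ) < ((n ! : ℕ) : ℝ) * ((n:ℝ)+1)^(m+1) := by positivity
    calc (b/2)^n * ((b/2)^2)^(m+1) / (((m+1)! : ℕ) * ((n+(m+1))! : ℕ))
        ≤ (b/2)^n * (1/4)^(m+1) / (((n ! : ℕ) : ℝ) * ((n:ℝ)+1)^(m+1)) := by
          apply div_le_div₀ (by positivity)
            (mul_le_mul_of_nonneg_left hq (by positivity)) hd2
          nlinarith [(Nat.cast_pos (α := ℝ)).mpr (Nat.factorial_pos (n+(m+1))), hfact, hm1]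
      _ = (t0 * r) * r^m := by
          rw [ht0, hr]
          rw [show ((1:ℝ)/(4*((n:ℝ)+1)))^m = (1/4)^m * (1/((n:ℝ)+1))^m by
            rw [← mul_pow]; congr 1; field_simp]
          have hne : ((n:ℝ)+1) ≠ 0 := by positivity
          field_simp
          have hp : ((1:ℝ)+n)⁻¹^m * (1+n)^m = 1 := by
            rw [← mul_pow, inv_mul_cancel₀ (by positivity), one_pow]
          linear_combination (-((n:ℝ)*(1/4)^m + (1/4)^m)) * hp
  have hrge : (0:ℝ) ≤ r := by rw [hr]; positivity
  have hrlt : r < 1 := by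
    rw [hr, div_lt_one (by positivity)]
    nlinarith [Nat.cast_nonneg (α := ℝ) n]
  have hgeo : Summable (fun m : ℕ => (t0 * r) * r^m) :=
    (summable_geometric_of_lt_one hrge hrlt).mul_left _
  have habs : Summable (fun m => |f (m+1)|) :=
    Summable.of_nonneg_of_le (fun m => abs_nonneg _) hbound hgeo
  have h2 : |besselJ n b - t0| ≤ ∑' m, (t0 * r) * r^m := by
    calc |besselJ n b - t0| = |∑' m, f (m+1)| := by rw [htail.tsum_eq]
      _ ≤ ∑' m, |f (m+1)| := by
          simpa using norm_tsum_le_tsum_norm (f := fun m => f (m+1)) (by simpa using habs)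
      _ ≤ ∑' m, (t0 * r) * r^m := Summable.tsum_le_tsum hbound habs hgeo
  have h3 : ∑' m : ℕ, (t0 * r) * r^m = t0 * r / (1 - r) := by
    rw [tsum_mul_left, tsum_geometric_of_lt_one hrge hrlt]
    rw [div_eq_mul_inv]
  have h4 : t0 * r / (1 - r) ≤ t0 / (3*((n:ℝ)+1)) := by
    have hu : (0:ℝ) < (n:ℝ)+1 := by positivity
    have h1r : (0:ℝ) < 1 - r := by nlinarith
    rw [div_le_div_iff₀ h1r (by positivity)]
    have h5 : r ≤ 1/4 := by
      rw [hr, div_le_div_iff₀ (by positivity) (by norm_num)]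
      nlinarith
    have h6 : r * (3*((n:ℝ)+1)) = 3/4 := by
      rw [hr]; field_simp
    calc t0 * r * (3*((n:ℝ)+1)) = t0 * (3/4) := by rw [mul_assoc, h6]
      _ ≤ t0 * (1 - r) := by nlinarith
  calc |besselJ n b - t0| ≤ ∑' m, (t0 * r) * r^m := h2
    _ = t0 * r / (1-r) := h3
    _ ≤ t0 / (3*((n:ℝ)+1)) := h4
    _ = t0 / (3*(n+1)) := by norm_num

theorem besselJ_abs_sorting_of_le_one (a : ℝ) (ha0 : 0 < |a|) (ha : |a| ≤ 1)
    (k l : ℤ) (hkl : |k| < |l|) :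
    |besselJ k a| > |besselJ l a| := by
  set b : ℝ := |a| with hb
  set K := k.natAbs with hK
  set L := l.natAbs with hL
  have hKL : K < L := by
    rw [Int.abs_eq_natAbs, Int.abs_eq_natAbs] at hkl
    exact_mod_cast hkl
  have hL1 : 1 ≤ L := by omega
  rw [besselJ_abs_abs k a, besselJ_abs_abs l a, besselJ_abs_natAbs k, besselJ_abs_natAbs l]
  have hestK := besselJ_est K b ha0 ha
  have hestL := besselJ_est L b ha0 ha
  set tK : ℝ := (b/2)^K / K ! with htK
  set tL : ℝ := (b/2)^L / L ! with htL
  have htKpos : 0 < tK := by rw [htK]; positivity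
  have htLpos : 0 < tL := by rw [htL]; positivity
  have hlow : (2/3) * tK ≤ besselJ K b := by
    have h1 : tK/(3*((K:ℝ)+1)) ≤ tK/3 := by
      apply div_le_div_of_nonneg_left htKpos.le (by norm_num)
      nlinarith [Nat.cast_nonneg (α := ℝ) K]
    have h2 := (abs_le.mp hestK).1
    have h3 : tK / (3*((K:ℝ)+1)) = tK / (3*((K:ℕ)+1:ℝ)) := by norm_num
    push_cast at h2
    nlinarith
  have hub : |besselJ L b| ≤ (7/6) * tL := by
    have h1 : tL/(3*((L:ℝ)+1)) ≤ tL/6 := by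
      apply div_le_div_of_nonneg_left htLpos.le (by norm_num)
      have : (1:ℝ) ≤ (L:ℝ) := by exact_mod_cast hL1
      nlinarith
    have h2 := abs_le.mp hestL
    push_cast at h2
    rw [abs_le]
    constructor <;> nlinarith [h2.1, h2.2]
  have hratio : tL ≤ (1/2) * tK := by
    have h1 : (b/2)^L ≤ (b/2)^K * (1/2) := by
      rw [show L = K + (L - K) by omega, pow_add]
      apply mul_le_mul_of_nonneg_left _ (by positivity)
      calc (b/2)^(L-K) ≤ (1/2)^(L-K) := by
            apply pow_le_pow_left₀ (by positivity)
            rw [hb]; linarith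
        _ ≤ (1/2)^1 := by
            apply pow_le_pow_of_le_one (by norm_num) (by norm_num)
            omega
        _ = 1/2 := pow_one _
    have h2 : ((K ! : ℕ):ℝ) ≤ ((L ! : ℕ):ℝ) := by
      exact_mod_cast Nat.factorial_le hKL.le
    have hKfpos : (0:ℝ) < ((K ! : ℕ):ℝ) := by positivity
    calc tL ≤ ((b/2)^K * (1/2)) / ((K ! : ℕ):ℝ) := by
          rw [htL]
          exact div_le_div₀ (by positivity) h1 hKfpos h2
      _ = (1/2) * tK := by rw [htK]; ring
  have hfin : besselJ K b ≤ |besselJ K b| := le_abs_self _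
  calc |besselJ L b| ≤ (7/6) * tL := hub
    _ ≤ (7/12) * tK := by linarith
    _ < (2/3) * tK := by nlinarith
    _ ≤ besselJ K b := hlow
    _ ≤ |besselJ K b| := hfin
end
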